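/- For a one-dimensional random variable x with p(x ∈ (a,b)) = 1 and a twice differentiable function φ on (a,b), the Jensen gap satisfies (inf_x φ''(x)) · Var(x) / 2 ≤ E[φ(x)] − φ(E[x]) ≤ (sup_x φ''(x)) · Var(x) / 2. -/

import Mathlib

/-!
Expand `φ` to second order around the mean `μ = E[X]`. If `m ≤ φ'' ≤ M` on the interval, then
`φ - m x² / 2` is convex and `M x² / 2 - φ` is convex there, so comparing each with its tangent
line at `μ` gives, for every `x` in the interval,
`m (x - μ)² / 2 ≤ φ x - φ μ - φ' μ (x - μ) ≤ M (x - μ)² / 2`.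
Taking expectations kills the linear term and turns `(X - μ)²` into `Var X`. The mean itself lies
in the interval: otherwise the whole interval, hence `X`, would lie strictly on one side of it.
-/

open MeasureTheory ProbabilityTheory Set

section TangentBounds

variable {S : Set ℝ} {f f' f'' : ℝ → ℝ} {x y : ℝ}

theorem ConvexOn.add_mul_sub_le_of_hasDerivAt (hf : ConvexOn ℝ S f) (hx : x ∈ S) (hy : y ∈ S)
    {d : ℝ} (hd : HasDerivAt f d x) : f x + d * (y - x) ≤ f y := by
  rcases lt_trichotomy x y with hxy | rfl | hyx
  · have hslope := hf.le_slope_of_hasDerivAt hx hy hxy hd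
    rw [slope_def_field, le_div_iff₀ (sub_pos.2 hxy)] at hslope
    linarith
  · simp
  · have hslope := hf.slope_le_of_hasDerivAt hy hx hyx hd
    rw [slope_def_field, div_le_iff₀ (sub_pos.2 hyx)] at hslope
    linarith

theorem hasDerivAt_half_mul_sq (m x : ℝ) : HasDerivAt (fun x => m / 2 * x ^ 2) (m * x) x :=
  ((hasDerivAt_pow 2 x).const_mul (m / 2)).congr_deriv (by push_cast; ring)

theorem convexOn_sub_half_mul_sq (hS : Convex ℝ S) (hf' : ∀ x ∈ S, HasDerivAt f (f' x) x)
    (hf'' : ∀ x ∈ S, HasDerivAt f' (f'' x) x) {m : ℝ} (hm : ∀ x ∈ S, m ≤ f'' x) :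
    ConvexOn ℝ S fun x => f x - m / 2 * x ^ 2 := by
  have hlin (x : ℝ) : HasDerivAt (fun x => m * x) m x := by
    simpa using (hasDerivAt_id x).const_mul m
  refine convexOn_of_hasDerivWithinAt2_nonneg (f' := fun x => f' x - m * x)
    (f'' := fun x => f'' x - m) hS ?_ ?_ ?_ ?_
  · exact fun x hx => ((hf' x hx).sub (hasDerivAt_half_mul_sq m x)).continuousAt.continuousWithinAt
  · exact fun x hx =>
      ((hf' x (interior_subset hx)).sub (hasDerivAt_half_mul_sq m x)).hasDerivWithinAt
  · exact fun x hx => ((hf'' x (interior_subset hx)).sub (hlin x)).hasDerivWithinAt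
  · exact fun x hx => sub_nonneg.2 (hm x (interior_subset hx))

theorem half_mul_sq_le_sub_sub_mul (hS : Convex ℝ S) (hf' : ∀ x ∈ S, HasDerivAt f (f' x) x)
    (hf'' : ∀ x ∈ S, HasDerivAt f' (f'' x) x) {m : ℝ} (hm : ∀ x ∈ S, m ≤ f'' x)
    (hx : x ∈ S) (hy : y ∈ S) :
    m / 2 * (y - x) ^ 2 ≤ f y - f x - f' x * (y - x) := by
  have htangent := (convexOn_sub_half_mul_sq hS hf' hf'' hm).add_mul_sub_le_of_hasDerivAt hx hy
    ((hf' x hx).sub (hasDerivAt_half_mul_sq m x))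
  linear_combination htangent

theorem sub_sub_mul_le_half_mul_sq (hS : Convex ℝ S) (hf' : ∀ x ∈ S, HasDerivAt f (f' x) x)
    (hf'' : ∀ x ∈ S, HasDerivAt f' (f'' x) x) {M : ℝ} (hM : ∀ x ∈ S, f'' x ≤ M)
    (hx : x ∈ S) (hy : y ∈ S) :
    f y - f x - f' x * (y - x) ≤ M / 2 * (y - x) ^ 2 := by
  have hneg := half_mul_sq_le_sub_sub_mul (f := -f) (f' := -f') (f'' := -f'') (m := -M) hS
    (fun x hx => (hf' x hx).neg) (fun x hx => (hf'' x hx).neg) (fun x hx => neg_le_neg (hM x hx))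
    hx hy
  simp only [Pi.neg_apply] at hneg
  linarith

end TangentBounds

section Expectation

variable {Ω : Type*} [MeasurableSpace Ω] {μ : Measure Ω} {X Y : Ω → ℝ}

theorem integral_half_mul_sq_sub_integral (hX : AEMeasurable X μ) (m : ℝ) :
    ∫ ω, m / 2 * (X ω - μ[X]) ^ 2 ∂μ = m * Var[X; μ] / 2 := by
  rw [integral_const_mul, variance_eq_integral hX]
  ring

variable [IsProbabilityMeasure μ]

theorem integral_lt_of_ae_lt (hX : Integrable X μ) {c : ℝ} (h : ∀ᵐ ω ∂μ, X ω < c) :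
    ∫ ω, X ω ∂μ < c := by
  have hsupp : Function.support (fun ω => c - X ω) =ᵐ[μ] univ :=
    Filter.eventuallyEq_univ.2 (h.mono fun ω hω => (sub_pos.2 hω).ne')
  have hpos : 0 < ∫ ω, (c - X ω) ∂μ := by
    rw [integral_pos_iff_support_of_nonneg_ae (h.mono fun ω hω => (sub_pos.2 hω).le)
      ((integrable_const c).sub hX), measure_congr hsupp, measure_univ]
    exact one_pos
  rw [integral_sub (integrable_const c) hX, integral_const, probReal_univ, one_smul] at hpos
  linarith

theorem lt_integral_of_ae_lt (hX : Integrable X μ) {c : ℝ} (h : ∀ᵐ ω ∂μ, c < X ω) :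
    c < ∫ ω, X ω ∂μ := by
  have := integral_lt_of_ae_lt (X := fun ω => -X ω) hX.neg (h.mono fun ω hω => neg_lt_neg hω)
  rw [integral_neg] at this
  linarith

theorem Set.OrdConnected.integral_mem {s : Set ℝ} (hs : s.OrdConnected)
    (hXs : ∀ᵐ ω ∂μ, X ω ∈ s) (hX : Integrable X μ) : ∫ ω, X ω ∂μ ∈ s := by
  set m := ∫ ω, X ω ∂μ
  by_contra hm
  by_cases hbelow : ∃ x ∈ s, x < m
  · obtain ⟨x, hx, hxm⟩ := hbelow
    have hlt (y : ℝ) (hy : y ∈ s) : y < m :=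
      lt_of_not_ge fun hmy => hm (hs.out hx hy ⟨hxm.le, hmy⟩)
    exact (integral_lt_of_ae_lt hX (hXs.mono fun ω hω => hlt _ hω)).false
  · push Not at hbelow
    have hgt (y : ℝ) (hy : y ∈ s) : m < y := (hbelow y hy).lt_of_ne fun h => hm (h ▸ hy)
    exact (lt_integral_of_ae_lt hX (hXs.mono fun ω hω => hgt _ hω)).false

theorem integral_sub_sub_mul_sub_integral (hY : Integrable Y μ) (hX : Integrable X μ)
    (c d : ℝ) :
    ∫ ω, (Y ω - c - d * (X ω - μ[X])) ∂μ = μ[Y] - c := by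
  rw [integral_sub (f := fun ω => Y ω - c) (g := fun ω => d * (X ω - μ[X]))
      (hY.sub (integrable_const c)) ((hX.sub (integrable_const _)).const_mul d),
    integral_sub hY (integrable_const c), integral_const_mul, integral_sub hX (integrable_const _)]
  simp

theorem mul_variance_div_two_le_integral_sub (hX : MemLp X 2 μ) (hY : Integrable Y μ)
    {m c d : ℝ}
    (h : ∀ᵐ ω ∂μ, m / 2 * (X ω - μ[X]) ^ 2 ≤ Y ω - c - d * (X ω - μ[X])) :
    m * Var[X; μ] / 2 ≤ μ[Y] - c := by
  have hXi := hX.integrable one_le_two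
  rw [← integral_half_mul_sq_sub_integral hX.aestronglyMeasurable.aemeasurable,
    ← integral_sub_sub_mul_sub_integral hY hXi c d]
  exact integral_mono_ae ((hX.sub (memLp_const _)).integrable_sq.const_mul _)
    ((hY.sub (integrable_const c)).sub ((hXi.sub (integrable_const _)).const_mul d)) h

theorem integral_sub_le_mul_variance_div_two (hX : MemLp X 2 μ) (hY : Integrable Y μ)
    {M c d : ℝ}
    (h : ∀ᵐ ω ∂μ, Y ω - c - d * (X ω - μ[X]) ≤ M / 2 * (X ω - μ[X]) ^ 2) :
    μ[Y] - c ≤ M * Var[X; μ] / 2 := by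
  have hXi := hX.integrable one_le_two
  rw [← integral_half_mul_sq_sub_integral hX.aestronglyMeasurable.aemeasurable,
    ← integral_sub_sub_mul_sub_integral hY hXi c d]
  exact integral_mono_ae
    ((hY.sub (integrable_const c)).sub ((hXi.sub (integrable_const _)).const_mul d))
    ((hX.sub (memLp_const _)).integrable_sq.const_mul _) h

end Expectation

theorem jensen_gap_bounds_general
    {Ω : Type*} [MeasureSpace Ω] [IsProbabilityMeasure (ℙ : Measure Ω)]
    (X : Ω → ℝ) (a b : EReal)
    (S : Set ℝ) (hS : S = {x : ℝ | a < (x : EReal) ∧ (x : EReal) < b})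
    (hsupp : ∀ᵐ ω, X ω ∈ S)
    (φ : ℝ → ℝ)
    (hφ : ∀ x ∈ S, DifferentiableAt ℝ φ x ∧ DifferentiableAt ℝ (deriv φ) x)
    (hXint : Integrable X) (hX2 : MemLp X 2)
    (hφXint : Integrable (fun ω => φ (X ω)))
    (hbdd_below : BddBelow (iteratedDeriv 2 φ '' S))
    (hbdd_above : BddAbove (iteratedDeriv 2 φ '' S)) :
    sInf (iteratedDeriv 2 φ '' S) * variance X ℙ / 2
        ≤ (∫ ω, φ (X ω)) - φ (∫ ω, X ω) ∧
      (∫ ω, φ (X ω)) - φ (∫ ω, X ω)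
        ≤ sSup (iteratedDeriv 2 φ '' S) * variance X ℙ / 2 := by
  have hS_ord : S.OrdConnected :=
    hS ▸ ordConnected_Ioo.preimage_mono EReal.coe_strictMono.monotone
  have hmean : ∫ ω, X ω ∈ S := hS_ord.integral_mem hsupp hXint
  have hφ' (x : ℝ) (hx : x ∈ S) : HasDerivAt φ (deriv φ x) x := (hφ x hx).1.hasDerivAt
  have hφ'' (x : ℝ) (hx : x ∈ S) : HasDerivAt (deriv φ) (iteratedDeriv 2 φ x) x := by
    rw [iteratedDeriv_succ, iteratedDeriv_one]
    exact (hφ x hx).2.hasDerivAt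
  constructor
  · refine mul_variance_div_two_le_integral_sub hX2 hφXint (d := deriv φ (∫ ω, X ω)) ?_
    filter_upwards [hsupp] with ω hω
    exact half_mul_sq_le_sub_sub_mul hS_ord.convex hφ' hφ''
      (fun x hx => csInf_le hbdd_below (mem_image_of_mem _ hx)) hmean hω
  · refine integral_sub_le_mul_variance_div_two hX2 hφXint (d := deriv φ (∫ ω, X ω)) ?_
    filter_upwards [hsupp] with ω hω
    exact sub_sub_mul_le_half_mul_sq hS_ord.convex hφ' hφ''
      (fun x hx => le_csSup hbdd_above (mem_image_of_mem _ hx)) hmean hω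

/-- The Jensen gap bounds: for a real random variable `X` supported a.s. in an interval
`(a, b)` (where `a, b` may be infinite, encoded as `EReal`s), and a function `φ` twice
differentiable on `(a, b)` with bounded second derivative there,
`(inf φ'') · Var(X) / 2 ≤ E[φ(X)] − φ(E[X]) ≤ (sup φ'') · Var(X) / 2`. -/
theorem jensen_gap_bounds
    {Ω : Type*} [MeasureSpace Ω] [IsProbabilityMeasure (ℙ : Measure Ω)]
    (X : Ω → ℝ) (a b : EReal) (hab : a < b)
    (S : Set ℝ) (hS : S = {x : ℝ | a < (x : EReal) ∧ (x : EReal) < b})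
    (hsupp : ∀ᵐ ω, X ω ∈ S)
    (φ : ℝ → ℝ)
    (hφ : ∀ x ∈ S, DifferentiableAt ℝ φ x ∧ DifferentiableAt ℝ (deriv φ) x)
    (hXint : Integrable X) (hX2 : MemLp X 2)
    (hφXint : Integrable (fun ω => φ (X ω)))
    (hbdd_below : BddBelow (iteratedDeriv 2 φ '' S))
    (hbdd_above : BddAbove (iteratedDeriv 2 φ '' S)) :
    sInf (iteratedDeriv 2 φ '' S) * variance X ℙ / 2
        ≤ (∫ ω, φ (X ω)) - φ (∫ ω, X ω) ∧
      (∫ ω, φ (X ω)) - φ (∫ ω, X ω)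
        ≤ sSup (iteratedDeriv 2 φ '' S) * variance X ℙ / 2 :=
  jensen_gap_bounds_general X a b S hS hsupp φ hφ hXint hX2 hφXint hbdd_below hbdd_above
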